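/- Let X, Y be strings of length n and suppose ED(X[Δ..n), Y[0..n−Δ)) ≤ γ for some Δ ∈ [0, β) with β ≤ n. Let x ∈ [Δ, β] and y ∈ [0, x−Δ] with x − Δ − y ≤ γ, and set n' = n − β. Then ED(X[x..x+n'), Y[y..y+n')) ≤ 3γ. -/

import Mathlib

/-- Levenshtein cost structure (removed from Mathlib; restored with its old definition). -/
structure Levenshtein.Cost (α β δ : Type*) where
  delete : α → δ
  insert : β → δ
  substitute : α → β → δ

/-- The default unit costs (restored from the older Mathlib). -/
def Levenshtein.defaultCost {α : Type*} [DecidableEq α] : Levenshtein.Cost α α ℕ :=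
  ⟨fun _ => 1, fun _ => 1, fun a b => if a = b then 0 else 1⟩

/-- Helper of the older Mathlib's `suffixLevenshtein`. -/
def Levenshtein.impl {α β δ : Type*} [AddZeroClass δ] [Min δ] (C : Levenshtein.Cost α β δ)
    (xs : List α) (y : β) (d : {r : List δ // 0 < r.length}) :
    {r : List δ // 0 < r.length} :=
  let ⟨ds, w⟩ := d
  xs.zip (ds.zip ds.tail) |>.foldr
    (init := ⟨[ds.getLast (List.length_pos_iff.mp w) + C.insert y], by simp⟩)
    (fun ⟨x, d₀, d₁⟩ ⟨r, w⟩ =>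
      ⟨min (C.delete x + r[0]) (min (C.insert y + d₀) (C.substitute x y + d₁)) :: r, by simp⟩)

/-- Suffix Levenshtein distances (restored from the older Mathlib). -/
def suffixLevenshtein {α β δ : Type*} [AddZeroClass δ] [Min δ] (C : Levenshtein.Cost α β δ)
    (xs : List α) (ys : List β) : {r : List δ // 0 < r.length} :=
  ys.foldr
    (Levenshtein.impl C xs)
    (xs.foldr (init := ⟨[0], by simp⟩) (fun a ⟨ds, w⟩ => ⟨(C.delete a + ds[0]) :: ds, by simp⟩))

/-- Levenshtein distance (restored from the older Mathlib). -/
def levenshtein {α β δ : Type*} [AddZeroClass δ] [Min δ] (C : Levenshtein.Cost α β δ)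
    (xs : List α) (ys : List β) : δ :=
  let ⟨r, w⟩ := suffixLevenshtein C xs ys
  r[0]

/-- The edit distance between two lists (Levenshtein distance with unit costs). -/
def ED {α : Type*} [DecidableEq α] (X Y : List α) : ℕ :=
  levenshtein Levenshtein.defaultCost X Y

/-! Restricting two strings of equal length to the same window cannot increase their edit
distance, since trimming an equal number of characters at either end of both strings never
helps; so `X[x..x+n')` is within `γ` of `Y[x-Δ..x-Δ+n')`. Sliding a window of `Y` by `s`
positions costs at most `2 s` edits (`s` at each end), and here `s = x-Δ-y ≤ γ`. -/

namespace Levenshtein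

variable {α β δ : Type*} [AddZeroClass δ] [Min δ] (C : Cost α β δ)

theorem impl_cons (x : α) (xs : List α) (y : β) (d : δ) (ds : List δ)
    (w : 0 < (d :: ds).length) (w' : 0 < ds.length) :
    impl C (x :: xs) y ⟨d :: ds, w⟩ =
      let ⟨r, w⟩ := impl C xs y ⟨ds, w'⟩
      ⟨min (C.delete x + r[0]) (min (C.insert y + d) (C.substitute x y + ds[0])) :: r,
        by simp⟩ :=
  match ds, w' with | _ :: _, _ => rfl

theorem impl_cons_getElem_zero (x : α) (xs : List α) (y : β) (d : δ) (ds : List δ)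
    (w : 0 < (d :: ds).length) (h : 0 < (impl C (x :: xs) y ⟨d :: ds, w⟩).1.length)
    (w' : 0 < ds.length) :
    (impl C (x :: xs) y ⟨d :: ds, w⟩).1[0]'h =
      let ⟨r, w⟩ := impl C xs y ⟨ds, w'⟩
      min (C.delete x + r[0]) (min (C.insert y + d) (C.substitute x y + ds[0])) :=
  match ds, w' with | _ :: _, _ => rfl

theorem impl_length (xs : List α) (y : β) (d : {r : List δ // 0 < r.length})
    (w : d.1.length = xs.length + 1) :
    (impl C xs y d).1.length = xs.length + 1 := by
  induction xs generalizing d with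
  | nil => rfl
  | cons x xs ih =>
    match d, w with
    | ⟨_ :: d₂ :: ds, _⟩, w =>
      rw [impl_cons (w' := by simp)]
      simpa using ih ⟨d₂ :: ds, by simp⟩ (by simpa using w)

end Levenshtein

section SuffixLevenshtein

open Levenshtein

variable {α β δ : Type*} [AddZeroClass δ] [Min δ] (C : Cost α β δ)

theorem suffixLevenshtein_length (xs : List α) (ys : List β) :
    (suffixLevenshtein C xs ys).1.length = xs.length + 1 := by
  induction ys with
  | nil => induction xs <;> simp_all [suffixLevenshtein]
  | cons y ys ih => exact impl_length C xs y _ ih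

theorem suffixLevenshtein_cons_left (x : α) (xs : List α) (ys : List β) :
    suffixLevenshtein C (x :: xs) ys =
      ⟨levenshtein C (x :: xs) ys :: (suffixLevenshtein C xs ys).1, by simp⟩ := by
  induction ys with
  | nil => rfl
  | cons y ys ih =>
    have ext : ∀ {r s : {r : List δ // 0 < r.length}},
        r.1[0] = s.1[0] → r.1.tail = s.1.tail → r = s
      | ⟨_ :: _, _⟩, ⟨_ :: _, _⟩, h₀, h => by simp_all
    refine ext rfl ?_
    show (impl C (x :: xs) y (suffixLevenshtein C (x :: xs) ys)).1.tail = _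
    rw [ih, impl_cons (w' := by simp [suffixLevenshtein_length])]
    rfl

theorem levenshtein_nil_cons (y : β) (ys : List β) :
    levenshtein C [] (y :: ys) = levenshtein C [] ys + C.insert y := by
  have hl := suffixLevenshtein_length C [] ys
  show (impl C [] y (suffixLevenshtein C [] ys)).1[0]'(impl ..).2 =
    (suffixLevenshtein C [] ys).1[0]'(suffixLevenshtein ..).2 + _
  generalize suffixLevenshtein C [] ys = d at hl ⊢
  match d, hl with
  | ⟨[_], _⟩, _ => rfl

theorem levenshtein_cons_nil (x : α) (xs : List α) :
    levenshtein C (x :: xs) [] = C.delete x + levenshtein C xs [] := rfl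

theorem levenshtein_cons_cons (x : α) (xs : List α) (y : β) (ys : List β) :
    levenshtein C (x :: xs) (y :: ys) =
      min (C.delete x + levenshtein C xs (y :: ys))
        (min (C.insert y + levenshtein C (x :: xs) ys)
          (C.substitute x y + levenshtein C xs ys)) := by
  show (impl C (x :: xs) y (suffixLevenshtein C (x :: xs) ys)).1[0]'(impl ..).2 = _
  simp only [suffixLevenshtein_cons_left]
  rw [impl_cons_getElem_zero (w' := by simp [suffixLevenshtein_length])]
  rfl

end SuffixLevenshtein

section EditDistance

variable {α : Type*} [DecidableEq α]

theorem ED_nil_left (ys : List α) : ED [] ys = ys.length := by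
  induction ys with
  | nil => rfl
  | cons y ys ih => exact (levenshtein_nil_cons _ y ys).trans (congrArg (· + 1) ih)

theorem ED_nil_right (xs : List α) : ED xs [] = xs.length := by
  induction xs with
  | nil => rfl
  | cons x xs ih =>
    exact (levenshtein_cons_nil _ x xs).trans ((add_comm _ _).trans (congrArg (· + 1) ih))

theorem ED_cons_cons (x y : α) (xs ys : List α) :
    ED (x :: xs) (y :: ys) =
      min (ED xs (y :: ys) + 1)
        (min (ED (x :: xs) ys + 1) (ED xs ys + if x = y then 0 else 1)) := by
  simp only [ED, levenshtein_cons_cons, Levenshtein.defaultCost, add_comm]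

theorem ED_comm : ∀ xs ys : List α, ED xs ys = ED ys xs
  | [], ys => by rw [ED_nil_left, ED_nil_right]
  | x :: xs, [] => by rw [ED_nil_left, ED_nil_right]
  | x :: xs, y :: ys => by
    rw [ED_cons_cons, ED_cons_cons, ED_comm xs (y :: ys), ED_comm (x :: xs) ys, ED_comm xs ys]
    simp only [eq_comm (a := x)]
    omega

theorem ED_cons_left_le (x : α) (xs ys : List α) : ED (x :: xs) ys ≤ ED xs ys + 1 := by
  cases ys with
  | nil => simp [ED_nil_right]
  | cons y ys => rw [ED_cons_cons]; omega

theorem ED_cons_right_le (y : α) (xs ys : List α) : ED xs (y :: ys) ≤ ED xs ys + 1 := by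
  rw [ED_comm, ED_comm xs]
  exact ED_cons_left_le y ys xs

theorem ED_le_cons_left (x : α) (xs ys : List α) : ED xs ys ≤ ED (x :: xs) ys + 1 := by
  induction ys with
  | nil => simp only [ED_nil_right, List.length_cons]; omega
  | cons y ys ih =>
    have := ED_cons_right_le y xs ys
    rw [ED_cons_cons]
    omega

theorem ED_le_cons_right (y : α) (xs ys : List α) : ED xs ys ≤ ED xs (y :: ys) + 1 := by
  rw [ED_comm, ED_comm xs]
  exact ED_le_cons_left y ys xs

theorem ED_le_cons_cons (x y : α) (xs ys : List α) : ED xs ys ≤ ED (x :: xs) (y :: ys) := by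
  have := ED_le_cons_left x xs ys
  have := ED_le_cons_right y xs ys
  rw [ED_cons_cons]
  omega

theorem length_le_length_add_ED : ∀ xs ys : List α, ys.length ≤ xs.length + ED xs ys
  | [], ys => by simp [ED_nil_left]
  | x :: xs, [] => by simp
  | x :: xs, y :: ys => by
    have := length_le_length_add_ED xs (y :: ys)
    have := length_le_length_add_ED (x :: xs) ys
    have := length_le_length_add_ED xs ys
    simp only [ED_cons_cons, List.length_cons] at *
    omega

theorem ED_append_right_le (xs us ys : List α) : ED xs (us ++ ys) ≤ ED xs ys + us.length := by
  induction us with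
  | nil => simp
  | cons u us ih =>
    have := ED_cons_right_le u xs (us ++ ys)
    simp only [List.cons_append, List.length_cons]
    omega

theorem ED_le_append_append_left (xs ys : List α) :
    ∀ ps qs : List α, ps.length = qs.length → ED xs ys ≤ ED (ps ++ xs) (qs ++ ys)
  | [], [], _ => le_rfl
  | _ :: ps, _ :: qs, h =>
    (ED_le_append_append_left xs ys ps qs (by simpa using h)).trans (ED_le_cons_cons ..)

theorem ED_le_append_append_right (ps qs : List α) :
    ∀ xs ys : List α, ED xs ys ≤ ED (xs ++ ps) (ys ++ qs) + Nat.dist ps.length qs.length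
  | [], ys => by
    have := length_le_length_add_ED ps (ys ++ qs)
    simp only [ED_nil_left, List.nil_append, List.length_append, Nat.dist] at *
    omega
  | x :: xs, [] => by
    have := length_le_length_add_ED qs (x :: xs ++ ps)
    simp only [ED_nil_right, List.nil_append, List.length_append, Nat.dist, ED_comm qs] at *
    omega
  | x :: xs, y :: ys => by
    have := ED_le_append_append_right ps qs xs (y :: ys)
    have := ED_le_append_append_right ps qs (x :: xs) ys
    have := ED_le_append_append_right ps qs xs ys
    simp only [ED_cons_cons, List.cons_append] at *
    omega

theorem ED_take_le {xs ys : List α} (h : xs.length = ys.length) (m : ℕ) :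
    ED (xs.take m) (ys.take m) ≤ ED xs ys := by
  simpa [h] using ED_le_append_append_right (xs.drop m) (ys.drop m) (xs.take m) (ys.take m)

theorem ED_drop_le {xs ys : List α} (h : xs.length = ys.length) (i : ℕ) :
    ED (xs.drop i) (ys.drop i) ≤ ED xs ys := by
  simpa using ED_le_append_append_left (xs.drop i) (ys.drop i) (xs.take i) (ys.take i) (by simp [h])

theorem ED_drop_take_le {xs ys : List α} (h : xs.length = ys.length) (i m : ℕ) :
    ED ((xs.drop i).take m) ((ys.drop i).take m) ≤ ED xs ys :=
  (ED_take_le (by simp [h]) m).trans (ED_drop_le h i)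

theorem ED_drop_take_le_drop_add (xs l : List α) (i s m : ℕ) :
    ED xs ((l.drop i).take m) ≤ ED xs ((l.drop (i + s)).take m) + 2 * s := by
  have hmid : ED xs ((l.drop i).take m) ≤ ED xs ((l.drop i).take (m + s)) + s := by
    have := ED_le_append_append_right [] (((l.drop i).drop m).take s) xs ((l.drop i).take m)
    rw [List.append_nil, ← List.take_add] at this
    have := List.length_take_le s ((l.drop i).drop m)
    simp only [List.length_nil, Nat.dist] at *
    omega
  have hpre : ED xs ((l.drop i).take (m + s)) ≤ ED xs ((l.drop (i + s)).take m) + s := by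
    rw [add_comm, List.take_add, List.drop_drop]
    have := ED_append_right_le xs ((l.drop i).take s) ((l.drop (i + s)).take m)
    have := List.length_take_le s (l.drop i)
    omega
  omega

end EditDistance

theorem stmt_8_general {α : Type*} [DecidableEq α] (n β γ Δ x y : ℕ) (X Y : List α)
    (hX : X.length = n) (hY : Y.length = n)
    (h : ED (X.drop Δ) (Y.take (n - Δ)) ≤ γ)
    (hxl : Δ ≤ x) (hxu : x ≤ β) (hyu : y ≤ x - Δ) (hshift : x - Δ - y ≤ γ) :
    ED ((X.drop x).take (n - β)) ((Y.drop y).take (n - β)) ≤ 3 * γ := by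
  have hwindow : ED ((X.drop x).take (n - β)) ((Y.drop (x - Δ)).take (n - β)) ≤ γ := by
    have hlen : (X.drop Δ).length = (Y.take (n - Δ)).length := by simp [hX, hY]
    have := ED_drop_take_le hlen (x - Δ) (n - β)
    rw [List.drop_drop, Nat.add_sub_cancel' hxl, List.drop_take, List.take_take,
      min_eq_left (by omega)] at this
    exact this.trans h
  have hslide := ED_drop_take_le_drop_add ((X.drop x).take (n - β)) Y y (x - Δ - y) (n - β)
  rw [Nat.add_sub_cancel' hyu] at hslide
  omega

/-- If ED(X[Δ..n), Y[0..n−Δ)) ≤ γ for some shift Δ ∈ [0,β), and x ∈ [Δ,β],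
y ∈ [0,x−Δ] with x−Δ−y ≤ γ, then the windows X[x..x+n') and Y[y..y+n')
with n' = n−β are at edit distance at most 3γ. -/
theorem stmt_8 {α : Type*} [DecidableEq α] (n β γ Δ x y : ℕ) (X Y : List α)
    (hX : X.length = n) (hY : Y.length = n) (hβn : β ≤ n) (hΔ : Δ < β)
    (h : ED (X.drop Δ) (Y.take (n - Δ)) ≤ γ)
    (hxl : Δ ≤ x) (hxu : x ≤ β) (hyu : y ≤ x - Δ) (hshift : x - Δ - y ≤ γ) :
    ED ((X.drop x).take (n - β)) ((Y.drop y).take (n - β)) ≤ 3 * γ :=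
  stmt_8_general n β γ Δ x y X Y hX hY h hxl hxu hyu hshift
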